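/- Let λ be a real number with λ ≠ 1/2 and λ·s₁·(1+2ra) ≠ 1. Define the vector v ∈ ℝ^(m+2) by: v_{m+1} = 1; v_{1+(m−j)} = (λ s₁ (1+2ra))^j for j = 1, …, m−1; v₁ = (λ^m s₁^(m−1) (1+2ra)^m (λ s₁ s₂ (1+2ra) − s₁ s₂) + 1)/(λ s₁ (1+2ra) − 1); and v₀ = v₁/(s₂(2λ−1)). Then A_m v = λ v if and only if φ(λ) = 1, where φ(λ) = λ^m · s₁^(m−1) · s₂ · (1+2ra)^m · (λ(1+2ra) − 1) · (s₂(2λ−1)(λ s₁(1+2ra) − 1) − s₁). -/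

import Mathlib

/-- The (m+2)×(m+2) matrix A_m from the paper, rows/columns indexed 0,…,m+1. -/
noncomputable def Amat (s₁ s₂ r a : ℝ) (m : ℕ) : Matrix (Fin (m + 2)) (Fin (m + 2)) ℝ :=
  Matrix.of fun i j =>
    if i.val = 0 then
      (if j.val = 0 then 1 / 2 else if j.val = 1 then 1 / (2 * s₂) else 0)
    else if i.val = 1 then
      (if j.val = 0 then 1 / (1 + 2 * r * a)
       else if j.val = 1 ∨ j.val = m + 1 then 1 / (s₁ + 2 * r * s₁ * a) else 0)
    else if i.val = 2 then
      (if 1 ≤ j.val then 1 / (s₂ + 2 * r * s₂ * a) else 0)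
    else
      (if j.val + 1 = i.val then 1 / (s₁ + 2 * r * s₁ * a) else 0)

/-- The auxiliary function φ from the paper. -/
noncomputable def phi (s₁ s₂ r a : ℝ) (m : ℕ) (l : ℝ) : ℝ :=
  l ^ m * s₁ ^ (m - 1) * s₂ * (1 + 2 * r * a) ^ m * (l * (1 + 2 * r * a) - 1) *
    (s₂ * (2 * l - 1) * (l * s₁ * (1 + 2 * r * a) - 1) - s₁)

/-!
Write `q = λ s₁ (1 + 2ra)`, so that the tail of `v` is `v_i = q^(m+1-i)`. Rows 0 and 3, …, m+1 of
`A_m v = λ v` hold for every `λ`: row 0 is the defining relation of `v₀`, and row `i ≥ 3` reads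
`v_{i-1} = q v_i`. In row 2 the geometric sum of the tail combines with `v₁` into `q^m s₂ / s₁`,
because `1/s₁ + 1/s₂ = 1`. So only row 1 is a condition on `λ`: with
`D = s₂ (2λ - 1)(q - 1) - s₁` it says `v₁ D = s₂ (2λ - 1)`, and clearing the denominator of `v₁`
gives `s₁ (φ(λ) - 1) = (q - 1)(v₁ D - s₂ (2λ - 1))`.
-/

open Matrix Finset

theorem sum_univ_pow_sub_eq_sum_range {R : Type*} [Semiring R] (x : R) (n : ℕ) :
    ∑ i : Fin (n + 1), x ^ (n - (i : ℕ)) = ∑ i ∈ range (n + 1), x ^ i := by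
  rw [Fin.sum_univ_eq_sum_range (fun i => x ^ (n - i))]
  exact sum_range_reflect (x ^ ·) (n + 1)

namespace Amat

section MulVec

variable {s₁ s₂ r a : ℝ} {n : ℕ} (v : Fin (n + 3) → ℝ)

theorem mulVec_apply_zero :
    (Amat s₁ s₂ r a (n + 1) *ᵥ v) 0 = v 0 / 2 + v 1 / (2 * s₂) := by
  simp [mulVec, dotProduct, Fin.sum_univ_succ, Amat, div_eq_inv_mul]

theorem mulVec_apply_one :
    (Amat s₁ s₂ r a (n + 1) *ᵥ v) 1 =
      v 0 / (1 + 2 * r * a) + (v 1 + v (Fin.last _)) / (s₁ + 2 * r * s₁ * a) := by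
  rw [mulVec, dotProduct, Fin.sum_univ_succ, Fin.sum_univ_succ, Fin.sum_univ_castSucc]
  simp [Amat, Fin.val_succ, add_assoc, div_eq_inv_mul, mul_add, fun x : Fin n => x.isLt.ne]

theorem mulVec_apply_two :
    (Amat s₁ s₂ r a (n + 1) *ᵥ v) 2 =
      (v 1 + ∑ i : Fin (n + 1), v i.succ.succ) / (s₂ + 2 * r * s₂ * a) := by
  have h2 : (2 : Fin (n + 3)).val = 2 := by simp
  rw [mulVec, dotProduct, Fin.sum_univ_succ, Fin.sum_univ_succ]
  simp only [Amat, of_apply, h2, Fin.val_succ, Fin.val_zero]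
  simp [div_eq_inv_mul, mul_add, Finset.mul_sum]

theorem mulVec_apply_succ_succ_succ (i : Fin n) :
    (Amat s₁ s₂ r a (n + 1) *ᵥ v) i.succ.succ.succ =
      v i.succ.succ.castSucc / (s₁ + 2 * r * s₁ * a) := by
  rw [mulVec, dotProduct, Fintype.sum_eq_single i.succ.succ.castSucc]
  · simp [Amat, div_eq_inv_mul]
  · intro j hj
    have : (j : ℕ) ≠ i + 2 := fun h => hj (Fin.ext (by simpa using h))
    simp [Amat, this]

theorem mulVec_eq_smul_iff (l : ℝ) :
    Amat s₁ s₂ r a (n + 1) *ᵥ v = l • v ↔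
      v 0 / 2 + v 1 / (2 * s₂) = l * v 0 ∧
      v 0 / (1 + 2 * r * a) + (v 1 + v (Fin.last _)) / (s₁ + 2 * r * s₁ * a) = l * v 1 ∧
      (v 1 + ∑ i : Fin (n + 1), v i.succ.succ) / (s₂ + 2 * r * s₂ * a) = l * v 2 ∧
      ∀ i : Fin n, v i.succ.succ.castSucc / (s₁ + 2 * r * s₁ * a) = l * v i.succ.succ.succ := by
  rw [funext_iff, Fin.forall_fin_succ, Fin.forall_fin_succ, Fin.forall_fin_succ]
  simp only [Fin.succ_zero_eq_one, Fin.succ_one_eq_two, Pi.smul_apply, smul_eq_mul,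
    mulVec_apply_zero, mulVec_apply_one, mulVec_apply_two, mulVec_apply_succ_succ_succ]

end MulVec

section Rows

variable {s₁ s₂ P l Q u w : ℝ}

theorem row_zero_eq (hs₂ : s₂ ≠ 0) (hl : 2 * l - 1 ≠ 0) (hw : w = u / (s₂ * (2 * l - 1))) :
    w / 2 + u / (2 * s₂) = l * w := by
  rw [hw]
  field_simp
  ring

theorem row_two_eq (n : ℕ) (hs₁ : s₁ ≠ 0) (hs₂ : s₂ ≠ 0) (hP : P ≠ 0)
    (hsum : 1 / s₁ + 1 / s₂ = 1) (hq : l * s₁ * P ≠ 1)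
    (hu : u = ((l * s₁ * P) ^ (n + 1) * s₂ * (l * P - 1) + 1) / (l * s₁ * P - 1)) :
    (u + ∑ i ∈ range (n + 1), (l * s₁ * P) ^ i) / (s₂ * P) = l * (l * s₁ * P) ^ n := by
  have hsum' : s₁ + s₂ = s₁ * s₂ := by field_simp at hsum; linarith
  have hq' : l * s₁ * P - 1 ≠ 0 := sub_ne_zero.mpr hq
  rw [hu, geom_sum_eq hq]
  field_simp
  linear_combination l ^ (n + 1) * s₁ ^ n * P ^ (n + 1) * hsum'

theorem row_one_iff (hs₁ : s₁ ≠ 0) (hs₂ : s₂ ≠ 0) (hP : P ≠ 0) (hl : 2 * l - 1 ≠ 0)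
    (hq : l * s₁ * P ≠ 1) (hu : u = (Q * s₂ * (l * P - 1) + 1) / (l * s₁ * P - 1))
    (hw : w = u / (s₂ * (2 * l - 1))) :
    w / P + (u + 1) / (s₁ * P) = l * u ↔
      Q * s₂ * (l * P - 1) * (s₂ * (2 * l - 1) * (l * s₁ * P - 1) - s₁) = s₁ := by
  set D := s₂ * (2 * l - 1) * (l * s₁ * P - 1) - s₁
  have hq' : l * s₁ * P - 1 ≠ 0 := sub_ne_zero.mpr hq
  have hu' : u * (l * s₁ * P - 1) = Q * s₂ * (l * P - 1) + 1 := by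
    rw [hu, div_mul_cancel₀ _ hq']
  have hrow : w / P + (u + 1) / (s₁ * P) = l * u ↔ u * D = s₂ * (2 * l - 1) := by
    rw [hw]
    simp only [D]
    field_simp
    constructor <;> intro h <;> linear_combination -h
  have hfactor :
      Q * s₂ * (l * P - 1) * D - s₁ = (l * s₁ * P - 1) * (u * D - s₂ * (2 * l - 1)) := by
    linear_combination -D * hu'
  rw [hrow, ← sub_eq_zero (a := Q * s₂ * (l * P - 1) * D), hfactor, mul_eq_zero,
    or_iff_right hq', sub_eq_zero]

end Rows

end Amat

theorem mul_phi_succ (s₁ s₂ r a l : ℝ) (n : ℕ) :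
    s₁ * phi s₁ s₂ r a (n + 1) l =
      (l * s₁ * (1 + 2 * r * a)) ^ (n + 1) * s₂ * (l * (1 + 2 * r * a) - 1) *
        (s₂ * (2 * l - 1) * (l * s₁ * (1 + 2 * r * a) - 1) - s₁) := by
  rw [phi, Nat.add_sub_cancel, mul_pow, mul_pow]
  ring

theorem stmt_7 (s₁ s₂ r a : ℝ) (hs₁ : 1 < s₁) (hs₂ : 1 < s₂)
    (hsum : 1 / s₁ + 1 / s₂ = 1) (hr : 0 < r) (ha : 0 < a)
    (m : ℕ) (hm : 1 ≤ m) (l : ℝ) (hl : l ≠ 1 / 2)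
    (hl' : l * s₁ * (1 + 2 * r * a) ≠ 1)
    (v : Fin (m + 2) → ℝ)
    (hv1 : v 1 = (l ^ m * s₁ ^ (m - 1) * (1 + 2 * r * a) ^ m *
        (l * s₁ * s₂ * (1 + 2 * r * a) - s₁ * s₂) + 1) /
        (l * s₁ * (1 + 2 * r * a) - 1))
    (hv0 : v 0 = v 1 / (s₂ * (2 * l - 1)))
    (hvj : ∀ k : Fin (m + 2), 2 ≤ k.val →
      v k = (l * s₁ * (1 + 2 * r * a)) ^ (m + 1 - k.val)) :
    (Amat s₁ s₂ r a m).mulVec v = l • v ↔ phi s₁ s₂ r a m l = 1 := by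
  obtain ⟨n, rfl⟩ : ∃ n, m = n + 1 := ⟨m - 1, by omega⟩
  have hP : 1 + 2 * r * a ≠ 0 := by positivity
  have hs₁0 : s₁ ≠ 0 := by positivity
  have hs₂0 : s₂ ≠ 0 := by positivity
  have h2l : 2 * l - 1 ≠ 0 := fun h => hl (by linarith)
  have hv : ∀ i : Fin (n + 1), v i.succ.succ = (l * s₁ * (1 + 2 * r * a)) ^ (n - i) := by
    intro i
    rw [hvj _ (by simp)]
    simp
  have hu : v 1 = ((l * s₁ * (1 + 2 * r * a)) ^ (n + 1) * s₂ * (l * (1 + 2 * r * a) - 1) + 1) /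
      (l * s₁ * (1 + 2 * r * a) - 1) := by
    rw [hv1, Nat.add_sub_cancel, mul_pow, mul_pow]
    ring
  rw [Amat.mulVec_eq_smul_iff, show s₁ + 2 * r * s₁ * a = s₁ * (1 + 2 * r * a) by ring,
    show s₂ + 2 * r * s₂ * a = s₂ * (1 + 2 * r * a) by ring]
  have row₂ : (v 1 + ∑ i : Fin (n + 1), v i.succ.succ) / (s₂ * (1 + 2 * r * a)) = l * v 2 := by
    have hv₂ : v 2 = (l * s₁ * (1 + 2 * r * a)) ^ n := by simpa using hv 0
    rw [hv₂]
    simp only [hv, sum_univ_pow_sub_eq_sum_range]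
    exact Amat.row_two_eq n hs₁0 hs₂0 hP hsum hl' hu
  have rowₖ : ∀ i : Fin n, v i.succ.succ.castSucc / (s₁ * (1 + 2 * r * a)) =
      l * v i.succ.succ.succ := by
    intro i
    rw [hvj _ (by simp), hvj _ (by simp)]
    simp only [Fin.val_castSucc, Fin.val_succ]
    rw [show n + 1 + 1 - (i + 1 + 1) = n + 1 + 1 - (i + 1 + 1 + 1) + 1 by omega, pow_succ]
    field_simp
  have hlast : v (Fin.last _) = 1 := by simpa using hv (Fin.last n)
  rw [hlast, Amat.row_one_iff hs₁0 hs₂0 hP h2l hl' hu hv0, ← mul_eq_left₀ hs₁0, mul_phi_succ]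
  exact ⟨fun h => h.2.1, fun h => ⟨Amat.row_zero_eq hs₂0 h2l hv0, h, row₂, rowₖ⟩⟩
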